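/- Under the same setup, for the perturbed system with initial amplitude (1+ε) a₀, the corrector phase φ₁ satisfies φ₁(t,x) = −2 t |a₀(x)|² + O(t³) as t → 0; in particular, the leading-order phase shift between the two WKB solutions at small time t is −2 t |a₀(x)|². -/

import Mathlib

open MeasureTheory Filter Asymptotics Complex
open scoped Topology

/-- The Laplacian of a real-valued function on `ℝⁿ`. -/
noncomputable def lapR (n : ℕ) (f : EuclideanSpace ℝ (Fin n) → ℝ)
    (x : EuclideanSpace ℝ (Fin n)) : ℝ :=
  ∑ i : Fin n, fderiv ℝ (fun y => fderiv ℝ f y (EuclideanSpace.single i 1)) x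
    (EuclideanSpace.single i 1)

/-- The Laplacian of a complex-valued function on `ℝⁿ`. -/
noncomputable def lapC (n : ℕ) (f : EuclideanSpace ℝ (Fin n) → ℂ)
    (x : EuclideanSpace ℝ (Fin n)) : ℂ :=
  ∑ i : Fin n, fderiv ℝ (fun y => fderiv ℝ f y (EuclideanSpace.single i 1)) x
    (EuclideanSpace.single i 1)

lemma lapR_zero_fun (n : ℕ) (x : EuclideanSpace ℝ (Fin n)) :
    lapR n (fun _ => (0:ℝ)) x = 0 := by
  simp [lapR]

lemma norm_gradient_eq (n : ℕ) (f : EuclideanSpace ℝ (Fin n) → ℝ)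
    (y : EuclideanSpace ℝ (Fin n)) : ‖gradient f y‖ = ‖fderiv ℝ f y‖ := by
  unfold gradient
  exact LinearIsometryEquiv.norm_map _ _

lemma grad_curve_isBigO (n : ℕ) (ψ : ℝ → EuclideanSpace ℝ (Fin n) → ℝ)
    (hψ : ContDiff ℝ (⊤ : ℕ∞) fun p : ℝ × EuclideanSpace ℝ (Fin n) => ψ p.1 p.2)
    (x : EuclideanSpace ℝ (Fin n)) (hz : ψ 0 = fun _ => (0:ℝ)) :
    (fun t => gradient (ψ t) x) =O[𝓝 (0:ℝ)] fun t => t := by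
  have hrep : ∀ t : ℝ, fderiv ℝ (ψ t) x
      = (fderiv ℝ (fun p : ℝ × EuclideanSpace ℝ (Fin n) => ψ p.1 p.2) (t, x)).comp
        (ContinuousLinearMap.inr ℝ ℝ (EuclideanSpace ℝ (Fin n))) := by
    intro t
    have h1 : HasFDerivAt (fun p : ℝ × EuclideanSpace ℝ (Fin n) => ψ p.1 p.2)
        (fderiv ℝ (fun p : ℝ × EuclideanSpace ℝ (Fin n) => ψ p.1 p.2) (t, x)) (t, x) :=
      (hψ.differentiable (by simp) (t, x)).hasFDerivAt
    have h2 := hasFDerivAt_prodMk_right (𝕜 := ℝ) t x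
    have h3 := h1.comp x h2
    exact h3.fderiv
  have h3 : ContDiff ℝ (⊤ : ℕ∞) (fun t : ℝ =>
      fderiv ℝ (fun p : ℝ × EuclideanSpace ℝ (Fin n) => ψ p.1 p.2) (t, x)) := by
    have := (hψ.fderiv_right (m := (⊤ : ℕ∞)) (by simp)).comp
      (ContDiff.prodMk (contDiff_id (𝕜 := ℝ) (E := ℝ)) (contDiff_const (c := x)))
    exact this
  have hsm : Differentiable ℝ (fun t : ℝ => fderiv ℝ (ψ t) x) := by
    have h4 : Differentiable ℝ (fun t : ℝ =>
        (fderiv ℝ (fun p : ℝ × EuclideanSpace ℝ (Fin n) => ψ p.1 p.2) (t, x)).comp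
          (ContinuousLinearMap.inr ℝ ℝ (EuclideanSpace ℝ (Fin n)))) :=
      (h3.differentiable (by simp)).clm_comp (differentiable_const _)
    have he := funext hrep
    rw [he]; exact h4
  have hF0 : fderiv ℝ (ψ 0) x = 0 := by rw [hz]; simp
  have hO : (fun t : ℝ => fderiv ℝ (ψ t) x) =O[𝓝 (0:ℝ)] fun t => t := by
    have := (hsm 0).hasFDerivAt.isBigO_sub
    simpa [hF0] using this
  have hnorm : (fun t : ℝ => ‖gradient (ψ t) x‖) = fun t => ‖fderiv ℝ (ψ t) x‖ :=
    funext fun t => norm_gradient_eq n (ψ t) x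
  have h5 := hO.norm_left
  rw [← hnorm] at h5
  exact h5.of_norm_left

lemma inner_curves_hasDerivAt_zero (n : ℕ) (G G₁ : ℝ → EuclideanSpace ℝ (Fin n))
    (hG : G =O[𝓝 (0:ℝ)] fun t => t) (hG₁ : G₁ =O[𝓝 (0:ℝ)] fun t => t)
    (hG0 : G 0 = 0) :
    HasDerivAt (fun t => (inner ℝ (G t) (G₁ t) : ℝ)) 0 0 := by
  have h1 : (fun t => (inner ℝ (G t) (G₁ t) : ℝ)) =O[𝓝 (0:ℝ)] fun t => t * t := by
    refine IsBigO.trans ?_ (hG.norm_left.mul hG₁.norm_left)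
    refine IsBigO.of_bound 1 (Filter.Eventually.of_forall fun t => ?_)
    have h := abs_real_inner_le_norm (G t) (G₁ t)
    simp only [Real.norm_eq_abs, norm_mul, norm_norm, one_mul]
    calc |(inner ℝ (G t) (G₁ t) : ℝ)| ≤ ‖G t‖ * ‖G₁ t‖ := h
      _ ≤ |‖G t‖| * |‖G₁ t‖| := by
          rw [_root_.abs_of_nonneg (norm_nonneg (G t)),
            _root_.abs_of_nonneg (norm_nonneg (G₁ t))]
  have h2 : (fun t : ℝ => t * t) =o[𝓝 (0:ℝ)] fun t => t := by
    have hid : (fun t : ℝ => t) =o[𝓝 (0:ℝ)] (fun _ => (1:ℝ)) :=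
      (isLittleO_one_iff ℝ).mpr (by exact (continuous_id.tendsto (0:ℝ)))
    simpa using hid.mul_isBigO (isBigO_refl (fun t : ℝ => t) (𝓝 0))
  have h3 := h1.trans_isLittleO h2
  rw [hasDerivAt_iff_isLittleO]
  simpa [hG0] using h3

lemma cubic_bound_of_derivs_zero (T : ℝ) (hT : 0 < T) (g : ℝ → ℝ) (hg : ContDiff ℝ (⊤ : ℕ∞) g)
    (h0 : g 0 = 0) (h1 : deriv g 0 = 0) (h2 : deriv (deriv g) 0 = 0) :
    ∃ C : ℝ, ∀ t ∈ Set.Icc (0:ℝ) T, ‖g t‖ ≤ C * t ^ 3 := by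
  have hg1 : ContDiff ℝ ((⊤:ℕ∞) : WithTop ℕ∞) (deriv g) :=
    (contDiff_infty_iff_deriv.mp (hg.of_le (by simp))).2
  have hg2 : ContDiff ℝ ((⊤:ℕ∞) : WithTop ℕ∞) (deriv (deriv g)) :=
    (contDiff_infty_iff_deriv.mp hg1).2
  obtain ⟨C, hC⟩ := (isCompact_Icc (a := (0:ℝ)) (b := T)).exists_bound_of_continuousOn
    ((hg2.continuous_deriv (by exact_mod_cast le_top)).continuousOn)
  have hC0 : 0 ≤ C := le_trans (norm_nonneg _) (hC 0 ⟨le_refl 0, hT.le⟩)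
  have hA : ∀ u ∈ Set.Icc (0:ℝ) T, ‖deriv (deriv g) u‖ ≤ C * u := by
    intro u hu
    have h := Convex.norm_image_sub_le_of_norm_deriv_le
      (f := deriv (deriv g)) (s := Set.Icc (0:ℝ) T)
      (fun y _ => (hg2.differentiable (by simp)) y) hC
      (convex_Icc 0 T) ⟨le_refl 0, hT.le⟩ hu
    simpa [h2, Real.norm_eq_abs, _root_.abs_of_nonneg hu.1] using h
  have hB : ∀ s ∈ Set.Icc (0:ℝ) T, ‖deriv g s‖ ≤ C * s * s := by
    intro s hs
    have hsub : Set.Icc (0:ℝ) s ⊆ Set.Icc 0 T := Set.Icc_subset_Icc le_rfl hs.2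
    have h := Convex.norm_image_sub_le_of_norm_deriv_le
      (f := deriv g) (s := Set.Icc (0:ℝ) s) (C := C * s)
      (fun y _ => (hg1.differentiable (by simp)) y)
      (fun y hy => le_trans (hA y (hsub hy)) (mul_le_mul_of_nonneg_left hy.2 hC0))
      (convex_Icc 0 s) ⟨le_refl 0, hs.1⟩ ⟨hs.1, le_rfl⟩
    simpa [h1, Real.norm_eq_abs, _root_.abs_of_nonneg hs.1, mul_assoc] using h
  have hCt : ∀ t ∈ Set.Icc (0:ℝ) T, ‖g t‖ ≤ C * t * t * t := by
    intro t ht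
    have hsub : Set.Icc (0:ℝ) t ⊆ Set.Icc 0 T := Set.Icc_subset_Icc le_rfl ht.2
    have h := Convex.norm_image_sub_le_of_norm_deriv_le
      (f := g) (s := Set.Icc (0:ℝ) t) (C := C * t * t)
      (fun y _ => (hg.differentiable (by simp)) y)
      (fun y hy => le_trans (hB y (hsub hy))
        (by nlinarith [mul_self_le_mul_self hy.1 hy.2, hC0]))
      (convex_Icc 0 t) ⟨le_refl 0, ht.1⟩ ⟨ht.1, le_rfl⟩
    simpa [h0, Real.norm_eq_abs, _root_.abs_of_nonneg ht.1, mul_assoc] using h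
  exact ⟨C, fun t ht => by have := hCt t ht; nlinarith [ht.1, this, abs_nonneg (g t)]⟩

/-- for the linearized WKB corrector system with initial amplitude
perturbation `a^{(1)}(0) = a₀` (coming from data `(1+ε)a₀`), the corrector phase
satisfies `φ^{(1)}(t,x) = −2t|a₀(x)|² + O(t³)` as `t → 0`. -/
theorem stmt9 (n : ℕ) (T : ℝ) (hT : 0 < T)
    (φ a φ₁ : ℝ → EuclideanSpace ℝ (Fin n) → ℝ)
    (a₁ : ℝ → EuclideanSpace ℝ (Fin n) → ℂ)
    (a₀ : EuclideanSpace ℝ (Fin n) → ℝ) (ha₀ : ContDiff ℝ (⊤ : ℕ∞) a₀)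
    (hφ : ContDiff ℝ (⊤ : ℕ∞) fun p : ℝ × EuclideanSpace ℝ (Fin n) => φ p.1 p.2)
    (ha : ContDiff ℝ (⊤ : ℕ∞) fun p : ℝ × EuclideanSpace ℝ (Fin n) => a p.1 p.2)
    (hφ₁ : ContDiff ℝ (⊤ : ℕ∞) fun p : ℝ × EuclideanSpace ℝ (Fin n) => φ₁ p.1 p.2)
    (ha₁ : ContDiff ℝ (⊤ : ℕ∞) fun p : ℝ × EuclideanSpace ℝ (Fin n) => a₁ p.1 p.2)
    (heq1 : ∀ t ∈ Set.Icc 0 T, ∀ x, deriv (fun τ => φ τ x) t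
      + (1 / 2) * ‖gradient (φ t) x‖ ^ 2 + (a t x) ^ 2 = 0)
    (heq2 : ∀ t ∈ Set.Icc 0 T, ∀ x, deriv (fun τ => a τ x) t
      + (inner ℝ (gradient (φ t) x) (gradient (a t) x) : ℝ)
      + (1 / 2) * a t x * lapR n (φ t) x = 0)
    (hφ0 : ∀ x, φ 0 x = 0) (ha0 : ∀ x, a 0 x = a₀ x)
    (hlin1 : ∀ t ∈ Set.Icc 0 T, ∀ x, deriv (fun τ => φ₁ τ x) t
      + (inner ℝ (gradient (φ t) x) (gradient (φ₁ t) x) : ℝ)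
      + 2 * (a t x * (a₁ t x).re) = 0)
    (hlin2 : ∀ t ∈ Set.Icc 0 T, ∀ x, deriv (fun τ => a₁ τ x) t
      + fderiv ℝ (a₁ t) x (gradient (φ t) x)
      + ((inner ℝ (gradient (φ₁ t) x) (gradient (a t) x) : ℝ) : ℂ)
      + (1 / 2) * a₁ t x * (lapR n (φ t) x : ℝ)
      + (1 / 2) * (a t x : ℂ) * (lapR n (φ₁ t) x : ℝ)
      = (Complex.I / 2) * (lapR n (a t) x : ℝ))
    (hφ₁0 : ∀ x, φ₁ 0 x = 0) (ha₁0 : ∀ x, a₁ 0 x = (a₀ x : ℂ)) :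
    ∀ x, (fun t => φ₁ t x + 2 * t * (a₀ x) ^ 2) =O[𝓝[Set.Icc 0 T] 0] fun t => t ^ 3 := by
  intro x
  have h0T : (0:ℝ) ∈ Set.Icc 0 T := ⟨le_refl 0, hT.le⟩
  have hφ0' : φ 0 = fun _ => (0:ℝ) := funext hφ0
  have hφ₁0' : φ₁ 0 = fun _ => (0:ℝ) := funext hφ₁0
  have hg0 : gradient (φ 0) x = 0 := by rw [hφ0']; exact gradient_const _ _
  have hg10 : gradient (φ₁ 0) x = 0 := by rw [hφ₁0']; exact gradient_const _ _
  have hl0 : lapR n (φ 0) x = 0 := by rw [hφ0']; exact lapR_zero_fun n x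
  have hl10 : lapR n (φ₁ 0) x = 0 := by rw [hφ₁0']; exact lapR_zero_fun n x
  have hcφ₁ : ContDiff ℝ (⊤ : ℕ∞) (fun t => φ₁ t x) := by
    have := hφ₁.comp (ContDiff.prodMk (contDiff_id (𝕜 := ℝ) (E := ℝ)) (contDiff_const (c := x)))
    exact this
  have hca : ContDiff ℝ (⊤ : ℕ∞) (fun t => a t x) := by
    have := ha.comp (ContDiff.prodMk (contDiff_id (𝕜 := ℝ) (E := ℝ)) (contDiff_const (c := x)))
    exact this
  have hca₁ : ContDiff ℝ (⊤ : ℕ∞) (fun t => a₁ t x) := by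
    have := ha₁.comp (ContDiff.prodMk (contDiff_id (𝕜 := ℝ) (E := ℝ)) (contDiff_const (c := x)))
    exact this
  -- first derivative values at 0
  have hD0 : deriv (fun τ => φ₁ τ x) 0 = -(2 * (a₀ x) ^ 2) := by
    have h := hlin1 0 h0T x
    rw [hg0] at h
    simp only [inner_zero_left, ha0, ha₁0, Complex.ofReal_re] at h
    linarith
  have hA0 : deriv (fun τ => a τ x) 0 = 0 := by
    have h := heq2 0 h0T x
    rw [hg0, hl0] at h
    simp only [inner_zero_left] at h
    linarith
  have hA₁0 : deriv (fun τ => a₁ τ x) 0 = (Complex.I / 2) * (lapR n (a 0) x : ℝ) := by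
    have h := hlin2 0 h0T x
    rw [hg0, hg10, hl0, hl10] at h
    simpa using h
  -- HasDerivAt facts at 0
  have hda : HasDerivAt (fun t => a t x) 0 0 := by
    have := (hca.differentiable (by simp) 0).hasDerivAt
    rwa [hA0] at this
  have hda₁ : HasDerivAt (fun t => a₁ t x)
      ((Complex.I / 2) * (lapR n (a 0) x : ℝ)) 0 := by
    have := (hca₁.differentiable (by simp) 0).hasDerivAt
    rwa [hA₁0] at this
  have hre0 : ((Complex.I / 2) * ((lapR n (a 0) x : ℝ) : ℂ)).re = 0 := by
    simp [Complex.mul_re, Complex.div_re]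
  have hdre : HasDerivAt (fun t => (a₁ t x).re) 0 0 := by
    have h2 := (Complex.reCLM.hasFDerivAt.comp_hasDerivAt 0 hda₁)
    simpa [hre0, Function.comp_def] using h2
  have hdQ : HasDerivAt (fun t => 2 * (a t x * (a₁ t x).re)) 0 0 := by
    have := (hda.mul hdre).const_mul (2:ℝ)
    simpa using this
  have hdP : HasDerivAt
      (fun t => (inner ℝ (gradient (φ t) x) (gradient (φ₁ t) x) : ℝ)) 0 0 :=
    inner_curves_hasDerivAt_zero n _ _
      (grad_curve_isBigO n φ hφ x hφ0') (grad_curve_isBigO n φ₁ hφ₁ x hφ₁0') hg0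
  -- second derivative of the corrector phase vanishes at 0
  have hDsm : ContDiff ℝ ((⊤:ℕ∞) : WithTop ℕ∞) (deriv (fun τ => φ₁ τ x)) :=
    (contDiff_infty_iff_deriv.mp (hcφ₁.of_le (by simp))).2
  have hDD0 : deriv (deriv (fun τ => φ₁ τ x)) 0 = 0 := by
    have hdF : HasDerivAt (fun t =>
        -((inner ℝ (gradient (φ t) x) (gradient (φ₁ t) x) : ℝ)
          + 2 * (a t x * (a₁ t x).re))) 0 0 := by
      have h := (hdP.add hdQ).neg; rw [add_zero, neg_zero] at h; exact h
    have hDW : HasDerivAt (deriv (fun τ => φ₁ τ x))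
        (deriv (deriv (fun τ => φ₁ τ x)) 0) 0 :=
      (hDsm.differentiable (by simp) 0).hasDerivAt
    have heqDF : ∀ t ∈ Set.Icc (0:ℝ) T, deriv (fun τ => φ₁ τ x) t =
        -((inner ℝ (gradient (φ t) x) (gradient (φ₁ t) x) : ℝ)
          + 2 * (a t x * (a₁ t x).re)) := by
      intro t ht
      have h := hlin1 t ht x
      linarith
    have hU : UniqueDiffWithinAt ℝ (Set.Icc (0:ℝ) T) 0 := (uniqueDiffOn_Icc hT) 0 h0T
    have h1 := hDW.hasDerivWithinAt (s := Set.Icc (0:ℝ) T)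
    have h2 : HasDerivWithinAt (deriv (fun τ => φ₁ τ x)) 0 (Set.Icc 0 T) 0 :=
      (hdF.hasDerivWithinAt).congr heqDF (heqDF 0 h0T)
    have e1 := h1.derivWithin hU
    have e2 := h2.derivWithin hU
    rw [e1] at e2; exact e2
  -- assemble g and its derivatives
  set g : ℝ → ℝ := fun t => φ₁ t x + 2 * t * (a₀ x) ^ 2 with hgdef
  have hpoly : ∀ t : ℝ, HasDerivAt (fun s : ℝ => 2 * s * (a₀ x) ^ 2)
      (2 * (a₀ x) ^ 2) t := by
    intro t
    simpa using ((hasDerivAt_id t).const_mul (2:ℝ)).mul_const ((a₀ x) ^ 2)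
  have hcg : ContDiff ℝ (⊤ : ℕ∞) g :=
    hcφ₁.add (((contDiff_const (c := (2:ℝ))).mul contDiff_id).mul contDiff_const)
  have hderivg : deriv g = fun t => deriv (fun τ => φ₁ τ x) t + 2 * (a₀ x) ^ 2 := by
    funext t
    exact ((hcφ₁.differentiable (by simp) t).hasDerivAt.add (hpoly t)).deriv
  have hderivg2 : deriv (deriv g) = deriv (deriv (fun τ => φ₁ τ x)) := by
    rw [hderivg]
    funext t
    have h := (hDsm.differentiable (by simp) t).hasDerivAt
    exact (h.add_const _).deriv
  have hgz : g 0 = 0 := by simp [hgdef, hφ₁0 x]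
  have hg1z : deriv g 0 = 0 := by simp only [hderivg]; rw [hD0]; ring
  have hg2z : deriv (deriv g) 0 = 0 := by rw [hderivg2]; exact hDD0
  obtain ⟨C, hC⟩ := cubic_bound_of_derivs_zero T hT g hcg hgz hg1z hg2z
  rw [Asymptotics.isBigO_iff]
  refine ⟨C, ?_⟩
  filter_upwards [self_mem_nhdsWithin] with t ht
  have h := hC t ht
  have ht3 : ‖t ^ 3‖ = t ^ 3 := by
    rw [Real.norm_eq_abs, _root_.abs_of_nonneg (pow_nonneg ht.1 3)]
  rw [ht3]
  exact h
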